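/- arXiv:math/0506001 — 2 statements merged into one kernel-verified Lean document; each statement's English description precedes it below -/
import Mathlib

section
/- (Uniform approximation of the transport coefficient on compacts.) For l ∈ ℕ and B > 0 let F_{l,B} be the set of C¹ functions f : ℝ^{2l+1} → ℝ with ‖f‖_∞ ≤ B and ‖∂_i f‖_∞ ≤ B for all −l ≤ i ≤ l, and set A_{l,B}(α) = inf_{f ∈ F_{l,B}} ∫ a₀·(1 + ξ_f)² dν^gc_α − â(α), where a₀(x) = a(x_{−1}, x₀, x₁). Then for every δ > 0 and every ε > 0 there exist l₀ ∈ ℕ and B₀ > 0 such that for all l ≥ l₀ and B ≥ B₀: sup_{|α| ≤ δ} A_{l,B}(α) ≤ ε. -/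
open MeasureTheory

/-- `ν` is the product Gaussian probability measure `⊗_{i∈ℤ} N(α,1)` on `ℝ^ℤ`,
characterized through its finite-dimensional marginals. -/
def IsProductGaussian (α : ℝ) (ν : Measure (ℤ → ℝ)) : Prop :=
  IsProbabilityMeasure ν ∧
    ∀ S : Finset ℤ, ν.map (fun x (i : S) => x i)
      = Measure.pi fun _ : S => ProbabilityTheory.gaussianReal α 1

/-- The shift `τ^j` acting on configurations: `(τ^j x)_k = x_{k+j}`. -/
def shiftCfg (j : ℤ) (x : ℤ → ℝ) : ℤ → ℝ := fun k => x (k + j)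

/-- The window of coordinates `x_{−s},…,x_s` of a configuration. -/
def window (s : ℕ) (x : ℤ → ℝ) : Fin (2 * s + 1) → ℝ := fun i => x ((i : ℤ) - s)

/-- The partial derivative `∂_m` (at lattice site `m`) of the local function
determined by `G : ℝ^{2s+1} → ℝ` (sites `−s,…,s`), evaluated at the configuration `x`;
it vanishes for `|m| > s`. -/
noncomputable def pdLocal (s : ℕ) (G : (Fin (2 * s + 1) → ℝ) → ℝ) (m : ℤ) (x : ℤ → ℝ) : ℝ :=
  if h : (m + s).toNat < 2 * s + 1 ∧ 0 ≤ m + s then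
    fderiv ℝ G (window s x) (Pi.single ⟨(m + s).toNat, h.1⟩ 1)
  else 0

/-- The exact function `ξ_g = X_0(Σ_{j∈ℤ} τ^j g)` of the local function `g` determined
by `G : ℝ^{2s+1} → ℝ`: the finite sum `Σ_j X_0(τ^j g)`, where
`X_0(τ^j g)(x) = ∂_{−1}(τ^j g)(x) − 2∂_0(τ^j g)(x) + ∂_1(τ^j g)(x)`. -/
noncomputable def xiFun (s : ℕ) (G : (Fin (2 * s + 1) → ℝ) → ℝ) (x : ℤ → ℝ) : ℝ :=
  ∑ j ∈ Finset.Icc (-(s : ℤ) - 1) ((s : ℤ) + 1),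
    (pdLocal s G (-1 - j) (shiftCfg j x) - 2 * pdLocal s G (-j) (shiftCfg j x)
      + pdLocal s G (1 - j) (shiftCfg j x))

/-- A local function (given by `G` on the sites `−s,…,s`) which is `C¹` and bounded
with bounded first derivatives. -/
def GoodLocal (s : ℕ) (G : (Fin (2 * s + 1) → ℝ) → ℝ) : Prop :=
  ContDiff ℝ 1 G ∧ ∃ M : ℝ, ∀ p, |G p| ≤ M ∧ ‖fderiv ℝ G p‖ ≤ M

/-- `a₀(x) = a(x_{−1}, x₀, x₁)`. -/
def aZero (a : ℝ × ℝ × ℝ → ℝ) (x : ℤ → ℝ) : ℝ := a (x (-1), x 0, x 1)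

/-- The transport coefficient
`â(α) = inf_g ∫ a₀·(1 + ξ_g)² dν^gc_α`, the infimum running over all local `C¹`
bounded functions `g` with bounded first derivatives. -/
noncomputable def transportCoeff (a : ℝ × ℝ × ℝ → ℝ) (ν : Measure (ℤ → ℝ)) : ℝ :=
  sInf {r : ℝ | ∃ (s : ℕ) (G : (Fin (2 * s + 1) → ℝ) → ℝ), GoodLocal s G ∧
    r = ∫ x, aZero a x * (1 + xiFun s G x) ^ 2 ∂ν}

/-- Membership in the class `F_{l,B}`: a `C¹` function `f : ℝ^{2l+1} → ℝ` with
`‖f‖_∞ ≤ B` and `‖∂_i f‖_∞ ≤ B` for all `−l ≤ i ≤ l`. -/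
def MemF (l : ℕ) (B : ℝ) (G : (Fin (2 * l + 1) → ℝ) → ℝ) : Prop :=
  ContDiff ℝ 1 G ∧ (∀ p, |G p| ≤ B) ∧
    ∀ p (i : Fin (2 * l + 1)), |fderiv ℝ G p (Pi.single i 1)| ≤ B

namespace UAx
open ProbabilityTheory

noncomputable section

def Tset (s : ℕ) : Finset ℤ := Finset.Icc (-(2*(s:ℤ)+1)) (2*(s:ℤ)+1)

def extT (s : ℕ) (y : ↥(Tset s) → ℝ) : ℤ → ℝ :=
  fun k => if h : k ∈ Tset s then y ⟨k, h⟩ else 0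

def shiftAll (c : ℝ) (x : ℤ → ℝ) : ℤ → ℝ := fun k => x k + c

def trG {s : ℕ} (c : ℝ) (G : (Fin (2 * s + 1) → ℝ) → ℝ) : (Fin (2 * s + 1) → ℝ) → ℝ :=
  fun p => G (fun i => p i + c)

def piG (s : ℕ) : Measure (↥(Tset s) → ℝ) := Measure.pi fun _ => gaussianReal 0 1

instance (s : ℕ) : IsProbabilityMeasure (piG s) := by unfold piG; infer_instance

def Phi (a : ℝ × ℝ × ℝ → ℝ) (α : ℝ) (s : ℕ) (G : (Fin (2 * s + 1) → ℝ) → ℝ) : ℝ :=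
  ∫ y, aZero a (shiftAll α (extT s y)) * (1 + xiFun s G (extT s y)) ^ 2 ∂(piG s)

lemma pdLocal_congr {s : ℕ} {G : (Fin (2 * s + 1) → ℝ) → ℝ} {m : ℤ} {x x' : ℤ → ℝ}
    (h : window s x = window s x') : pdLocal s G m x = pdLocal s G m x' := by
  unfold pdLocal; rw [h]

lemma aZero_congr (a : ℝ × ℝ × ℝ → ℝ) {s : ℕ} {x x' : ℤ → ℝ}
    (h : ∀ k ∈ Tset s, x k = x' k) : aZero a x = aZero a x' := by
  unfold aZero
  rw [h (-1) (by simp [Tset, Finset.mem_Icc]; omega), h 0 (by simp [Tset, Finset.mem_Icc]; omega),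
    h 1 (by simp [Tset, Finset.mem_Icc]; omega)]

lemma xiFun_congr {s : ℕ} {G : (Fin (2 * s + 1) → ℝ) → ℝ} {x x' : ℤ → ℝ}
    (h : ∀ k ∈ Tset s, x k = x' k) : xiFun s G x = xiFun s G x' := by
  unfold xiFun
  refine Finset.sum_congr rfl fun j hj => ?_
  have hj' : -(s:ℤ) - 1 ≤ j ∧ j ≤ (s:ℤ) + 1 := by simpa [Finset.mem_Icc] using hj
  have hw : window s (shiftCfg j x) = window s (shiftCfg j x') := by
    funext i
    have hi := i.isLt
    show x ((i : ℤ) - s + j) = x' ((i : ℤ) - s + j)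
    exact h _ (by simp [Tset, Finset.mem_Icc]; omega)
  rw [pdLocal_congr hw, pdLocal_congr hw, pdLocal_congr hw]

-- continuing in namespace UAx, after locality lemmas
section EXT
lemma fderiv_trG {s : ℕ} (c : ℝ) {G : (Fin (2*s+1) → ℝ) → ℝ} (hG : Differentiable ℝ G)
    (p : Fin (2*s+1) → ℝ) :
    fderiv ℝ (trG c G) p = fderiv ℝ G (fun i => p i + c) := by
  have h1 : HasFDerivAt (fun q : Fin (2*s+1) → ℝ => fun i => q i + c)
      (ContinuousLinearMap.id ℝ (Fin (2*s+1) → ℝ)) p := by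
    have h : (fun q : Fin (2*s+1) → ℝ => fun i => q i + c)
        = fun q : Fin (2*s+1) → ℝ => q + Function.const (Fin (2*s+1)) c := rfl
    rw [h]
    simpa using (hasFDerivAt_id (𝕜 := ℝ) p).add_const (Function.const (Fin (2*s+1)) c)
  have h2 := ((hG (fun i => p i + c)).hasFDerivAt).comp p h1
  have h3 := h2.fderiv
  simp only [ContinuousLinearMap.comp_id] at h3
  exact h3

lemma contDiff_trG {s : ℕ} (c : ℝ) {G : (Fin (2*s+1) → ℝ) → ℝ} (hG : ContDiff ℝ 1 G) :
    ContDiff ℝ 1 (trG c G) :=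
  hG.comp (contDiff_id.add contDiff_const)

lemma window_shiftAll (s : ℕ) (c : ℝ) (x : ℤ → ℝ) :
    window s (shiftAll c x) = fun i => window s x i + c := rfl

lemma pdLocal_trG {s : ℕ} (c : ℝ) {G : (Fin (2*s+1) → ℝ) → ℝ} (hG : Differentiable ℝ G)
    (m : ℤ) (x : ℤ → ℝ) :
    pdLocal s (trG c G) m x = pdLocal s G m (shiftAll c x) := by
  unfold pdLocal
  split
  · rw [fderiv_trG c hG, window_shiftAll]
  · rfl

lemma shiftCfg_shiftAll (j : ℤ) (c : ℝ) (x : ℤ → ℝ) :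
    shiftCfg j (shiftAll c x) = shiftAll c (shiftCfg j x) := rfl

lemma xiFun_trG {s : ℕ} (c : ℝ) {G : (Fin (2*s+1) → ℝ) → ℝ} (hG : Differentiable ℝ G)
    (x : ℤ → ℝ) :
    xiFun s (trG c G) x = xiFun s G (shiftAll c x) := by
  unfold xiFun
  refine Finset.sum_congr rfl fun j _ => ?_
  simp only [shiftCfg_shiftAll, pdLocal_trG c hG]

lemma trG_neg_cancel {s : ℕ} (c : ℝ) (H : (Fin (2*s+1) → ℝ) → ℝ) :
    trG c (trG (-c) H) = H := by
  funext p
  show H (fun i => (p i + c) + (-c)) = H p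
  congr 1
  funext i
  ring

lemma good_trG {s : ℕ} (c : ℝ) {G : (Fin (2*s+1) → ℝ) → ℝ} {M : ℝ} (hG : ContDiff ℝ 1 G)
    (hM : ∀ p, |G p| ≤ M ∧ ‖fderiv ℝ G p‖ ≤ M) :
    ∀ p, |trG c G p| ≤ M ∧ ‖fderiv ℝ (trG c G) p‖ ≤ M := fun p =>
  ⟨(hM _).1, by rw [fderiv_trG c (hG.differentiable one_ne_zero)]; exact (hM _).2⟩

def emb (s l : ℕ) (h : s ≤ l) (i : Fin (2 * s + 1)) : Fin (2 * l + 1) :=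
  ⟨i + (l - s), by have := i.isLt; omega⟩

def Lmap (s l : ℕ) (h : s ≤ l) : (Fin (2 * l + 1) → ℝ) →L[ℝ] (Fin (2 * s + 1) → ℝ) :=
  ContinuousLinearMap.pi fun i => ContinuousLinearMap.proj (emb s l h i)

def extG (s l : ℕ) (h : s ≤ l) (G : (Fin (2*s+1) → ℝ) → ℝ) : (Fin (2*l+1) → ℝ) → ℝ :=
  fun q => G (Lmap s l h q)

lemma Lmap_apply (s l : ℕ) (h : s ≤ l) (q : Fin (2 * l + 1) → ℝ) (i : Fin (2 * s + 1)) :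
    Lmap s l h q i = q (emb s l h i) := rfl

lemma Lmap_window (s l : ℕ) (h : s ≤ l) (x : ℤ → ℝ) :
    (Lmap s l h (window l x)) = window s x := by
  funext i
  rw [Lmap_apply]
  show x (((i + (l - s) : ℕ) : ℤ) - l) = x ((i:ℤ) - s)
  congr 1
  have := i.isLt
  omega

lemma emb_inj (s l : ℕ) (h : s ≤ l) {i i' : Fin (2*s+1)} (he : emb s l h i = emb s l h i') :
    i = i' := by
  have := congrArg Fin.val he
  simp [emb] at this
  exact Fin.ext this

lemma Lmap_single_emb (s l : ℕ) (h : s ≤ l) (i0 : Fin (2*s+1)) :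
    Lmap s l h (Pi.single (emb s l h i0) 1) = Pi.single i0 1 := by
  funext i
  rw [Lmap_apply]
  rcases eq_or_ne i i0 with rfl | hne
  · simp
  · rw [Pi.single_eq_of_ne (fun hc => hne (emb_inj s l h hc)), Pi.single_eq_of_ne hne]

lemma Lmap_single_zero (s l : ℕ) (h : s ≤ l) (j : Fin (2*l+1)) (hj : ∀ i, emb s l h i ≠ j) :
    Lmap s l h (Pi.single j 1) = 0 := by
  funext i
  rw [Lmap_apply, Pi.zero_apply]
  exact Pi.single_eq_of_ne (hj i) 1

lemma fderiv_extG (s l : ℕ) (h : s ≤ l) {G : (Fin (2*s+1) → ℝ) → ℝ} (hG : Differentiable ℝ G)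
    (q : Fin (2*l+1) → ℝ) :
    fderiv ℝ (extG s l h G) q = (fderiv ℝ G (Lmap s l h q)).comp (Lmap s l h) :=
  (((hG _).hasFDerivAt).comp q (Lmap s l h).hasFDerivAt).fderiv

lemma pdLocal_extG (s l : ℕ) (h : s ≤ l) {G : (Fin (2*s+1) → ℝ) → ℝ} (hG : Differentiable ℝ G)
    (m : ℤ) (x : ℤ → ℝ) :
    pdLocal l (extG s l h G) m x = pdLocal s G m x := by
  unfold pdLocal
  by_cases hs : (m + (s:ℤ)).toNat < 2 * s + 1 ∧ 0 ≤ m + (s:ℤ)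
  · have hl : (m + (l:ℤ)).toNat < 2 * l + 1 ∧ 0 ≤ m + (l:ℤ) := by omega
    rw [dif_pos hl, dif_pos hs, fderiv_extG s l h hG]
    have he : emb s l h ⟨(m + (s:ℤ)).toNat, hs.1⟩ = ⟨(m + (l:ℤ)).toNat, hl.1⟩ := by
      apply Fin.ext
      simp only [emb]
      omega
    rw [ContinuousLinearMap.comp_apply, ← he, Lmap_single_emb, Lmap_window]
  · by_cases hl : (m + (l:ℤ)).toNat < 2 * l + 1 ∧ 0 ≤ m + (l:ℤ)
    · rw [dif_pos hl, dif_neg hs, fderiv_extG s l h hG]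
      have hz : Lmap s l h (Pi.single ⟨(m + (l:ℤ)).toNat, hl.1⟩ 1) = 0 := by
        apply Lmap_single_zero
        intro i hc
        apply hs
        have := congrArg Fin.val hc
        simp only [emb] at this
        have hi := i.isLt
        omega
      rw [ContinuousLinearMap.comp_apply, hz, map_zero]
    · rw [dif_neg hl, dif_neg hs]

lemma pdLocal_out {s : ℕ} {G : (Fin (2*s+1) → ℝ) → ℝ} {m : ℤ} (z : ℤ → ℝ)
    (hm : ¬((m + (s:ℤ)).toNat < 2 * s + 1 ∧ 0 ≤ m + (s:ℤ))) : pdLocal s G m z = 0 :=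
  dif_neg hm

lemma xiFun_extG (s l : ℕ) (h : s ≤ l) {G : (Fin (2*s+1) → ℝ) → ℝ} (hG : Differentiable ℝ G)
    (x : ℤ → ℝ) :
    xiFun l (extG s l h G) x = xiFun s G x := by
  unfold xiFun
  rw [Finset.sum_congr rfl (fun j _ => by
    rw [pdLocal_extG s l h hG, pdLocal_extG s l h hG, pdLocal_extG s l h hG])]
  symm
  apply Finset.sum_subset
  · intro j hj
    simp only [Finset.mem_Icc] at *
    omega
  · intro j hj hnj
    simp only [Finset.mem_Icc] at hj hnj
    rw [pdLocal_out _ (by omega), pdLocal_out _ (by omega), pdLocal_out _ (by omega)]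
    ring
end EXT

section INT
variable {a : ℝ × ℝ × ℝ → ℝ}

lemma continuous_extT (s : ℕ) (k : ℤ) :
    Continuous fun y : ↥(Tset s) → ℝ => extT s y k := by
  unfold extT
  by_cases hk : k ∈ Tset s
  · simpa [hk] using continuous_apply (⟨k, hk⟩ : ↥(Tset s))
  · simp only [dif_neg hk]
    exact continuous_const

lemma continuous_pdLocal {s : ℕ} {G : (Fin (2*s+1) → ℝ) → ℝ} (hG : ContDiff ℝ 1 G)
    (m j : ℤ) :
    Continuous fun y : ↥(Tset s) → ℝ => pdLocal s G m (shiftCfg j (extT s y)) := by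
  have hw : Continuous fun y : ↥(Tset s) → ℝ => window s (shiftCfg j (extT s y)) := by
    apply continuous_pi
    intro i
    exact continuous_extT s ((i:ℤ) - s + j)
  unfold pdLocal
  by_cases hm : (m + (s:ℤ)).toNat < 2 * s + 1 ∧ 0 ≤ m + (s:ℤ)
  · simp only [dif_pos hm]
    exact ((hG.continuous_fderiv one_ne_zero).comp hw).clm_apply continuous_const
  · simp only [dif_neg hm]
    exact continuous_const

lemma continuous_xiFun_extT {s : ℕ} {G : (Fin (2*s+1) → ℝ) → ℝ} (hG : ContDiff ℝ 1 G) :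
    Continuous fun y : ↥(Tset s) → ℝ => xiFun s G (extT s y) := by
  unfold xiFun
  apply continuous_finset_sum
  intro j _
  exact ((continuous_pdLocal hG _ j).sub
    (continuous_const.mul (continuous_pdLocal hG _ j))).add (continuous_pdLocal hG _ j)

lemma continuous_aZero_shift (ha : Continuous a) (s : ℕ) (c : ℝ) :
    Continuous fun y : ↥(Tset s) → ℝ => aZero a (shiftAll c (extT s y)) := by
  apply ha.comp
  exact ((continuous_extT s (-1)).add continuous_const).prodMk
    (((continuous_extT s 0).add continuous_const).prodMk
      ((continuous_extT s 1).add continuous_const))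

lemma continuous_aZero_ext (ha : Continuous a) (s : ℕ) :
    Continuous fun y : ↥(Tset s) → ℝ => aZero a (extT s y) := by
  apply ha.comp
  exact (continuous_extT s (-1)).prodMk
    ((continuous_extT s 0).prodMk (continuous_extT s 1))

lemma abs_pdLocal_le {s : ℕ} {G : (Fin (2*s+1) → ℝ) → ℝ} {M : ℝ}
    (hM : ∀ p, ‖fderiv ℝ G p‖ ≤ M) (m : ℤ) (z : ℤ → ℝ) :
    |pdLocal s G m z| ≤ M := by
  have hM0 : 0 ≤ M := le_trans (norm_nonneg _) (hM (fun _ => 0))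
  unfold pdLocal
  split
  · calc |fderiv ℝ G (window s z) (Pi.single _ 1)|
        ≤ ‖fderiv ℝ G (window s z)‖ * ‖(Pi.single _ 1 : Fin (2*s+1) → ℝ)‖ :=
          (fderiv ℝ G (window s z)).le_opNorm _
      _ ≤ M * 1 := by
          apply mul_le_mul (hM _) ?_ (norm_nonneg _) hM0
          simp [Pi.norm_single]
      _ = M := mul_one M
  · simpa using hM0

/-- crude bound constant for `xiFun`. -/
def K (s : ℕ) (M : ℝ) : ℝ := ((Finset.Icc (-(s:ℤ) - 1) ((s:ℤ) + 1)).card : ℝ) * (4 * M)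

lemma K_nonneg {s : ℕ} {M : ℝ} (hM0 : 0 ≤ M) : 0 ≤ K s M := by
  unfold K; positivity

lemma abs_xiFun_le {s : ℕ} {G : (Fin (2*s+1) → ℝ) → ℝ} {M : ℝ}
    (hM : ∀ p, ‖fderiv ℝ G p‖ ≤ M) (x : ℤ → ℝ) :
    |xiFun s G x| ≤ K s M := by
  unfold xiFun K
  calc |∑ j ∈ Finset.Icc (-(s:ℤ) - 1) ((s:ℤ) + 1), _|
      ≤ ∑ j ∈ Finset.Icc (-(s:ℤ) - 1) ((s:ℤ) + 1),
        |pdLocal s G (-1 - j) (shiftCfg j x) - 2 * pdLocal s G (-j) (shiftCfg j x)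
          + pdLocal s G (1 - j) (shiftCfg j x)| := Finset.abs_sum_le_sum_abs _ _
    _ ≤ ∑ j ∈ Finset.Icc (-(s:ℤ) - 1) ((s:ℤ) + 1), (4 * M) := by
        apply Finset.sum_le_sum
        intro j _
        have h1 := abs_pdLocal_le hM (-1 - j) (shiftCfg j x)
        have h2 := abs_pdLocal_le hM (-j) (shiftCfg j x)
        have h3 := abs_pdLocal_le hM (1 - j) (shiftCfg j x)
        have e1 := abs_add_le (pdLocal s G (-1 - j) (shiftCfg j x)
          - 2 * pdLocal s G (-j) (shiftCfg j x)) (pdLocal s G (1 - j) (shiftCfg j x))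
        have e2 := abs_sub (pdLocal s G (-1 - j) (shiftCfg j x))
          (2 * pdLocal s G (-j) (shiftCfg j x))
        rw [abs_mul] at e2
        have : |(2:ℝ)| = 2 := by norm_num
        rw [this] at e2
        linarith
    _ = ((Finset.Icc (-(s:ℤ) - 1) ((s:ℤ) + 1)).card : ℝ) * (4 * M) := by
        rw [Finset.sum_const, nsmul_eq_mul]

lemma abs_aZero_le {astar : ℝ} (hastar : 1 ≤ astar)
    (hbd : ∀ p, astar⁻¹ ≤ a p ∧ a p ≤ astar) (x : ℤ → ℝ) : |aZero a x| ≤ astar := by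
  have h0 : (0:ℝ) < astar := lt_of_lt_of_le one_pos hastar
  have hi : (0:ℝ) ≤ astar⁻¹ := inv_nonneg.2 h0.le
  have h := hbd (x (-1), x 0, x 1)
  unfold aZero
  exact abs_le.2 ⟨by linarith, h.2⟩

lemma integrand_integrable {astar : ℝ} (ha : Continuous a) (hastar : 1 ≤ astar)
    (hbd : ∀ p, astar⁻¹ ≤ a p ∧ a p ≤ astar) {s : ℕ} {G : (Fin (2*s+1) → ℝ) → ℝ} {M : ℝ}
    (hG : ContDiff ℝ 1 G) (hM : ∀ p, ‖fderiv ℝ G p‖ ≤ M) (c : ℝ) :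
    Integrable (fun y : ↥(Tset s) → ℝ =>
      aZero a (shiftAll c (extT s y)) * (1 + xiFun s G (extT s y)) ^ 2) (piG s) := by
  have hM0 : 0 ≤ M := le_trans (norm_nonneg _) (hM (fun _ => 0))
  have hcont : Continuous (fun y : ↥(Tset s) → ℝ =>
      aZero a (shiftAll c (extT s y)) * (1 + xiFun s G (extT s y)) ^ 2) :=
    (continuous_aZero_shift ha s c).mul
      ((continuous_const.add (continuous_xiFun_extT hG)).pow 2)
  refine Integrable.mono' (integrable_const (astar * (1 + K s M) ^ 2))
    hcont.aestronglyMeasurable (Filter.Eventually.of_forall fun y => ?_)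
  rw [Real.norm_eq_abs, abs_mul]
  have h1 : |aZero a (shiftAll c (extT s y))| ≤ astar := abs_aZero_le hastar hbd _
  have h2 : |(1 + xiFun s G (extT s y)) ^ 2| ≤ (1 + K s M) ^ 2 := by
    rw [abs_pow]
    apply pow_le_pow_left₀ (abs_nonneg _)
    calc |1 + xiFun s G (extT s y)| ≤ 1 + |xiFun s G (extT s y)| := by
          simpa using abs_add_le 1 (xiFun s G (extT s y))
      _ ≤ 1 + K s M := by linarith [abs_xiFun_le hM (extT s y)]
  exact mul_le_mul h1 h2 (abs_nonneg _) (le_trans (abs_nonneg _) h1)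

lemma Phi_nonneg {astar : ℝ} (hastar : 1 ≤ astar)
    (hbd : ∀ p, astar⁻¹ ≤ a p ∧ a p ≤ astar) (α : ℝ) (s : ℕ)
    (G : (Fin (2*s+1) → ℝ) → ℝ) : 0 ≤ Phi a α s G := by
  apply integral_nonneg
  intro y
  apply mul_nonneg ?_ (sq_nonneg _)
  have h0 : (0:ℝ) < astar := lt_of_lt_of_le one_pos hastar
  exact le_trans (inv_nonneg.2 h0.le) (hbd _).1
end INT

section PHI
variable {a : ℝ × ℝ × ℝ → ℝ} {astar : ℝ}

lemma Phi_le (hastar : 1 ≤ astar) (ha : ContDiff ℝ 1 a) {La : ℝ}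
    (hLa : ∀ p, ‖fderiv ℝ a p‖ ≤ La)
    (hbd : ∀ p, astar⁻¹ ≤ a p ∧ a p ≤ astar) {s : ℕ} {G : (Fin (2*s+1) → ℝ) → ℝ} {M : ℝ}
    (hG : ContDiff ℝ 1 G) (hM : ∀ p, ‖fderiv ℝ G p‖ ≤ M) (α α' : ℝ) :
    Phi a α s G ≤ (1 + astar * La * |α - α'|) * Phi a α' s G := by
  have hast0 : (0:ℝ) < astar := lt_of_lt_of_le one_pos hastar
  have hLa0 : 0 ≤ La := le_trans (norm_nonneg _) (hLa 0)
  unfold Phi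
  rw [← integral_const_mul]
  apply integral_mono (integrand_integrable ha.continuous hastar hbd hG hM α)
    ((integrand_integrable ha.continuous hastar hbd hG hM α').const_mul _)
  intro y
  set z := extT s y with hz
  set u := (1 + xiFun s G z) ^ 2 with hu
  have hu0 : (0:ℝ) ≤ u := sq_nonneg _
  set p1 : ℝ × ℝ × ℝ := (z (-1) + α, z 0 + α, z 1 + α) with hp1
  set p2 : ℝ × ℝ × ℝ := (z (-1) + α', z 0 + α', z 1 + α') with hp2
  have key : a p1 ≤ a p2 + La * |α - α'| := by
    have hmvt := Convex.norm_image_sub_le_of_norm_fderiv_le (f := a) (𝕜 := ℝ)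
      (fun x _ => (ha.differentiable one_ne_zero).differentiableAt)
      (fun x _ => hLa x) convex_univ (Set.mem_univ p2) (Set.mem_univ p1)
    have hn : ‖p1 - p2‖ = |α - α'| := by
      have hsub : p1 - p2 = (α - α', α - α', α - α') := by
        simp only [hp1, hp2, Prod.mk_sub_mk, Prod.mk.injEq]
        refine ⟨by ring, by ring, by ring⟩
      rw [hsub]
      simp [Prod.norm_def, Real.norm_eq_abs]
    rw [hn] at hmvt
    have := le_trans (le_abs_self _) hmvt
    rw [← Real.norm_eq_abs] at this ⊢
    linarith [this]
  have h1 : astar⁻¹ ≤ a p2 := (hbd p2).1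
  have h2 : (1:ℝ) ≤ astar * a p2 := by
    have := mul_le_mul_of_nonneg_left h1 hast0.le
    rwa [mul_inv_cancel₀ (ne_of_gt hast0)] at this
  have h3 : u ≤ astar * a p2 * u := le_mul_of_one_le_left hu0 h2
  have hd0 : 0 ≤ |α - α'| := abs_nonneg _
  show aZero a (shiftAll α z) * u ≤ (1 + astar * La * |α - α'|) * (aZero a (shiftAll α' z) * u)
  have ea1 : aZero a (shiftAll α z) = a p1 := rfl
  have ea2 : aZero a (shiftAll α' z) = a p2 := rfl
  rw [ea1, ea2]
  have e4 : a p1 * u ≤ (a p2 + La * |α - α'|) * u := mul_le_mul_of_nonneg_right key hu0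
  have e5 : La * |α - α'| * u ≤ La * |α - α'| * (astar * a p2 * u) :=
    mul_le_mul_of_nonneg_left h3 (mul_nonneg hLa0 hd0)
  nlinarith [e4, e5]

lemma xiFun_zero (s : ℕ) (x : ℤ → ℝ) : xiFun s (fun _ => (0:ℝ)) x = 0 := by
  have hz : ∀ (m : ℤ) (z : ℤ → ℝ), pdLocal s (fun _ => (0:ℝ)) m z = 0 := by
    intro m z
    unfold pdLocal
    split
    · simp
    · rfl
  unfold xiFun
  apply Finset.sum_eq_zero
  intro j _
  rw [hz, hz, hz]
  ring

lemma good_zero (s : ℕ) : GoodLocal s (fun _ => (0:ℝ)) := by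
  refine ⟨contDiff_const, 0, fun p => ⟨by simp, by simp⟩⟩

lemma Phi_zero_le (hastar : 1 ≤ astar) (ha : Continuous a)
    (hbd : ∀ p, astar⁻¹ ≤ a p ∧ a p ≤ astar) (α : ℝ) (s : ℕ) :
    Phi a α s (fun _ => (0:ℝ)) ≤ astar := by
  unfold Phi
  have hint := integrand_integrable (astar := astar) ha hastar hbd
    (G := fun _ : Fin (2*s+1) → ℝ => (0:ℝ)) (M := 0) contDiff_const (by simp) α
  calc ∫ y, aZero a (shiftAll α (extT s y)) * (1 + xiFun s (fun _ => (0:ℝ)) (extT s y)) ^ 2 ∂(piG s)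
      ≤ ∫ _, astar ∂(piG s) := by
        apply integral_mono hint (integrable_const astar)
        intro y
        simp only [xiFun_zero]
        norm_num
        exact (hbd _).2
    _ = astar := by simp
end PHI

section MAIN
variable {a : ℝ × ℝ × ℝ → ℝ} {astar : ℝ}

lemma memF_extG {s l : ℕ} (h : s ≤ l) {B M : ℝ} {G : (Fin (2*s+1) → ℝ) → ℝ}
    (hG : ContDiff ℝ 1 G) (hb : ∀ p, |G p| ≤ M) (hd : ∀ p, ‖fderiv ℝ G p‖ ≤ M)
    (hMB : M ≤ B) : MemF l B (extG s l h G) := by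
  have hM0 : 0 ≤ M := le_trans (abs_nonneg _) (hb (fun _ => 0))
  refine ⟨hG.comp (Lmap s l h).contDiff, fun p => le_trans (hb _) hMB, fun p i => ?_⟩
  rw [fderiv_extG s l h (hG.differentiable one_ne_zero), ContinuousLinearMap.comp_apply]
  have hnorm : ‖Lmap s l h (Pi.single i 1)‖ ≤ 1 := by
    by_cases hex : ∃ i0 : Fin (2*s+1), emb s l h i0 = i
    · obtain ⟨i0, rfl⟩ := hex
      rw [Lmap_single_emb]
      simp [Pi.norm_single]
    · push_neg at hex
      rw [Lmap_single_zero s l h i hex]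
      simp
  calc |fderiv ℝ G (Lmap s l h p) (Lmap s l h (Pi.single i 1))|
      ≤ ‖fderiv ℝ G (Lmap s l h p)‖ * ‖Lmap s l h (Pi.single i 1)‖ :=
        (fderiv ℝ G (Lmap s l h p)).le_opNorm _
    _ ≤ M * 1 := mul_le_mul (hd _) hnorm (norm_nonneg _) hM0
    _ ≤ B := by linarith

lemma integral_eq_Phi {α : ℝ} {ν : Measure (ℤ → ℝ)} (hν : IsProductGaussian α ν)
    (ha : Continuous a) {s : ℕ} {G : (Fin (2*s+1) → ℝ) → ℝ} (hG : ContDiff ℝ 1 G) :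
    ∫ x, aZero a x * (1 + xiFun s G x) ^ 2 ∂ν = Phi a α s (trG α G) := by
  obtain ⟨hprob, hmarg⟩ := hν
  have hR : Measurable (fun x : ℤ → ℝ => fun i : ↥(Tset s) => x i) :=
    measurable_pi_lambda _ fun i => measurable_pi_apply _
  have hΨcont : Continuous (fun y : ↥(Tset s) → ℝ =>
      aZero a (extT s y) * (1 + xiFun s G (extT s y)) ^ 2) :=
    (continuous_aZero_ext ha s).mul
      ((continuous_const.add (continuous_xiFun_extT hG)).pow 2)
  have step1 : ∀ x : ℤ → ℝ, aZero a x * (1 + xiFun s G x) ^ 2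
      = aZero a (extT s (fun i : ↥(Tset s) => x i))
        * (1 + xiFun s G (extT s (fun i : ↥(Tset s) => x i))) ^ 2 := by
    intro x
    have hag : ∀ k ∈ Tset s, extT s (fun i : ↥(Tset s) => x i) k = x k := by
      intro k hk
      simp [extT, hk]
    rw [aZero_congr a hag, xiFun_congr hag]
  have hmp : MeasurePreserving (fun (y : ↥(Tset s) → ℝ) i => y i + α) (piG s)
      (Measure.pi fun _ : ↥(Tset s) => gaussianReal α 1) := by
    unfold piG
    exact measurePreserving_pi _ _ (fun i =>
      ⟨measurable_id.add_const α,
        by simpa using gaussianReal_map_add_const (μ := 0) (v := 1) α⟩)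
  calc ∫ x, aZero a x * (1 + xiFun s G x) ^ 2 ∂ν
      = ∫ x, aZero a (extT s (fun i : ↥(Tset s) => x i))
          * (1 + xiFun s G (extT s (fun i : ↥(Tset s) => x i))) ^ 2 ∂ν := by
        exact integral_congr_ae (Filter.Eventually.of_forall step1)
    _ = ∫ y, aZero a (extT s y) * (1 + xiFun s G (extT s y)) ^ 2
          ∂(ν.map (fun x (i : ↥(Tset s)) => x i)) :=
        (integral_map hR.aemeasurable hΨcont.aestronglyMeasurable).symm
    _ = ∫ y, aZero a (extT s y) * (1 + xiFun s G (extT s y)) ^ 2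
          ∂(Measure.pi fun _ : ↥(Tset s) => gaussianReal α 1) := by rw [hmarg (Tset s)]
    _ = ∫ y, aZero a (extT s (fun i => y i + α))
          * (1 + xiFun s G (extT s (fun i => y i + α))) ^ 2 ∂(piG s) := by
        rw [← hmp.map_eq]
        exact integral_map hmp.measurable.aemeasurable
          (by rw [hmp.map_eq]; exact hΨcont.aestronglyMeasurable)
    _ = Phi a α s (trG α G) := by
        apply integral_congr_ae (Filter.Eventually.of_forall fun y => ?_)
        have hag : ∀ k ∈ Tset s, extT s (fun i => y i + α) k = shiftAll α (extT s y) k := by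
          intro k hk
          simp [extT, shiftAll, hk]
        rw [aZero_congr a hag, xiFun_congr hag, xiFun_trG α (hG.differentiable one_ne_zero)]

lemma transport_eq {α : ℝ} {ν : Measure (ℤ → ℝ)} (hν : IsProductGaussian α ν)
    (ha : ContDiff ℝ 1 a) :
    {r : ℝ | ∃ (s : ℕ) (G : (Fin (2 * s + 1) → ℝ) → ℝ), GoodLocal s G ∧
        r = ∫ x, aZero a x * (1 + xiFun s G x) ^ 2 ∂ν}
      = {r : ℝ | ∃ (s : ℕ) (G : (Fin (2 * s + 1) → ℝ) → ℝ), GoodLocal s G ∧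
        r = Phi a α s G} := by
  ext r
  simp only [Set.mem_setOf_eq]
  constructor
  · rintro ⟨s, G, ⟨hG1, M, hGM⟩, rfl⟩
    exact ⟨s, trG α G, ⟨contDiff_trG α hG1, M, good_trG α hG1 hGM⟩,
      integral_eq_Phi hν ha.continuous hG1⟩
  · rintro ⟨s, H, ⟨hH1, M, hHM⟩, rfl⟩
    refine ⟨s, trG (-α) H, ⟨contDiff_trG _ hH1, M, good_trG _ hH1 hHM⟩, ?_⟩
    rw [integral_eq_Phi hν ha.continuous (contDiff_trG _ hH1), trG_neg_cancel]
def PhiSet (a : ℝ × ℝ × ℝ → ℝ) (c : ℝ) : Set ℝ :=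
  {r : ℝ | ∃ (s : ℕ) (G : (Fin (2 * s + 1) → ℝ) → ℝ), GoodLocal s G ∧ r = Phi a c s G}

lemma PhiSet_nonempty (a : ℝ × ℝ × ℝ → ℝ) (c : ℝ) : (PhiSet a c).Nonempty :=
  ⟨Phi a c 0 (fun _ => 0), 0, fun _ => 0, good_zero 0, rfl⟩

lemma PhiSet_bddBelow {a : ℝ × ℝ × ℝ → ℝ} {astar : ℝ} (hastar : 1 ≤ astar)
    (hbd : ∀ p, astar⁻¹ ≤ a p ∧ a p ≤ astar) (c : ℝ) : BddBelow (PhiSet a c) := by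
  refine ⟨0, ?_⟩
  rintro r ⟨s, G, _, rfl⟩
  exact Phi_nonneg hastar hbd c s G

lemma transportCoeff_eq {a : ℝ × ℝ × ℝ → ℝ} {α : ℝ} {ν : Measure (ℤ → ℝ)}
    (hν : IsProductGaussian α ν) (ha : ContDiff ℝ 1 a) :
    transportCoeff a ν = sInf (PhiSet a α) := by
  unfold transportCoeff PhiSet
  rw [transport_eq hν ha]

end MAIN

end

end UAx

open UAx in
set_option maxHeartbeats 2000000 in
/-- **Uniform approximation of the transport coefficient on compacts.**
With `A_{l,B}(α) = inf_{f ∈ F_{l,B}} ∫ a₀·(1 + ξ_f)² dν^gc_α − â(α)`, for every `δ > 0`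
and `ε > 0` there are `l₀ ∈ ℕ` and `B₀ > 0` such that for all `l ≥ l₀` and `B ≥ B₀`,
`sup_{|α| ≤ δ} A_{l,B}(α) ≤ ε`. -/
theorem uniform_approximation_transport_coefficient
    (a : ℝ × ℝ × ℝ → ℝ) (astar : ℝ) (hastar : 1 ≤ astar)
    (ha : ContDiff ℝ 1 a) (hda : ∃ M : ℝ, ∀ p, ‖fderiv ℝ a p‖ ≤ M)
    (hbd : ∀ p, astar⁻¹ ≤ a p ∧ a p ≤ astar)
    (δ ε : ℝ) (hδ : 0 < δ) (hε : 0 < ε) :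
    ∃ (l₀ : ℕ) (B₀ : ℝ), 0 < B₀ ∧ ∀ (l : ℕ) (B : ℝ), l₀ ≤ l → B₀ ≤ B →
      ∀ (α : ℝ) (ν : Measure (ℤ → ℝ)), IsProductGaussian α ν → |α| ≤ δ →
        sInf {r : ℝ | ∃ G : (Fin (2 * l + 1) → ℝ) → ℝ, MemF l B G ∧
            r = ∫ x, aZero a x * (1 + xiFun l G x) ^ 2 ∂ν}
          - transportCoeff a ν ≤ ε := by
  classical
  obtain ⟨La, hLa⟩ := hda
  have hLa0 : 0 ≤ La := le_trans (norm_nonneg _) (hLa 0)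
  have hast0 : (0:ℝ) < astar := lt_of_lt_of_le one_pos hastar
  have hC0 : 0 ≤ astar * La := mul_nonneg hast0.le hLa0
  have hηex : ∃ η : ℝ, 0 < η ∧ astar * La * η ≤ 1 ∧ (astar * La * η) * astar ≤ ε / 9 := by
    refine ⟨min (1/(astar*La+1)) (ε/(9*astar*(astar*La+1))),
      lt_min (by positivity) (by positivity), ?_, ?_⟩
    · calc astar * La * min (1/(astar*La+1)) (ε/(9*astar*(astar*La+1)))
          ≤ astar * La * (1/(astar*La+1)) :=
            mul_le_mul_of_nonneg_left (min_le_left _ _) hC0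
        _ ≤ 1 := by
            rw [mul_one_div, div_le_one (by positivity)]
            linarith
    · calc astar * La * min (1/(astar*La+1)) (ε/(9*astar*(astar*La+1))) * astar
          ≤ astar * La * (ε/(9*astar*(astar*La+1))) * astar :=
            mul_le_mul_of_nonneg_right (mul_le_mul_of_nonneg_left (min_le_right _ _) hC0)
              hast0.le
        _ ≤ ε / 9 := by
            rw [show astar * La * (ε/(9*astar*(astar*La+1))) * astar
              = (astar * La * ε * astar) / (9*astar*(astar*La+1)) by ring]
            rw [div_le_div_iff₀ (by positivity) (by norm_num : (0:ℝ) < 9)]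
            nlinarith [hC0, hast0.le, hε.le]
  obtain ⟨η, hη0, hγ1, hγ2⟩ := hηex
  set N : ℕ := ⌈2*δ/η⌉₊ with hNdef
  set β : Fin (N+1) → ℝ := fun i => -δ + (i : ℕ) * η with hβdef
  have hwit : ∀ i : Fin (N+1), ∃ (s : ℕ) (G : (Fin (2*s+1) → ℝ) → ℝ) (M : ℝ),
      ContDiff ℝ 1 G ∧ (∀ p, |G p| ≤ M ∧ ‖fderiv ℝ G p‖ ≤ M) ∧
      Phi a (β i) s G < sInf (PhiSet a (β i)) + ε/3 := by
    intro i
    obtain ⟨r, hrS, hrlt⟩ := Real.lt_sInf_add_pos (PhiSet_nonempty a (β i))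
      (by positivity : (0:ℝ) < ε/3)
    obtain ⟨s, G, ⟨hGc, M, hGM⟩, rfl⟩ := hrS
    exact ⟨s, G, M, hGc, hGM, hrlt⟩
  choose sW GW MW hWc hWM hWlt using hwit
  refine ⟨Finset.univ.sup sW, 1 + ∑ i : Fin (N+1), |MW i|, by positivity, ?_⟩
  intro l B hl hB α ν hν hαδ
  have hαl : -δ ≤ α := neg_le_of_abs_le hαδ
  have hαu : α ≤ δ := le_of_abs_le hαδ
  have hnn : 0 ≤ (α + δ)/η := div_nonneg (by linarith) hη0.le
  have hivle : ⌊(α + δ)/η⌋₊ ≤ N := by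
    have h1 : (α + δ)/η ≤ 2*δ/η := (div_le_div_iff_of_pos_right hη0).mpr (by linarith)
    calc ⌊(α + δ)/η⌋₊ ≤ ⌊2*δ/η⌋₊ := Nat.floor_mono h1
      _ ≤ ⌈2*δ/η⌉₊ := Nat.floor_le_ceil _
      _ = N := rfl
  set i : Fin (N+1) := ⟨⌊(α + δ)/η⌋₊, Nat.lt_succ_of_le hivle⟩ with hidef
  have hβi : β i = -δ + (⌊(α + δ)/η⌋₊ : ℝ) * η := rfl
  have hclose : |α - β i| ≤ η := by
    have h1 : (⌊(α + δ)/η⌋₊ : ℝ) * η ≤ α + δ := by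
      calc (⌊(α + δ)/η⌋₊ : ℝ) * η ≤ ((α+δ)/η) * η :=
            mul_le_mul_of_nonneg_right (Nat.floor_le hnn) hη0.le
        _ = α + δ := div_mul_cancel₀ _ (ne_of_gt hη0)
    have h2 : α + δ < ((⌊(α + δ)/η⌋₊ : ℝ) + 1) * η := by
      have h := Nat.lt_floor_add_one ((α+δ)/η)
      calc α + δ = ((α+δ)/η) * η := (div_mul_cancel₀ _ (ne_of_gt hη0)).symm
        _ < ((⌊(α + δ)/η⌋₊ : ℝ) + 1) * η := by
            apply mul_lt_mul_of_pos_right ?_ hη0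
            exact_mod_cast h
    rw [hβi, abs_le]
    constructor <;> nlinarith [h1, h2]
  -- transport coefficient as inf over Phi at level α
  have htEq : transportCoeff a ν = sInf (PhiSet a α) := transportCoeff_eq hν ha
  have ht0 : 0 ≤ sInf (PhiSet a α) :=
    le_csInf (PhiSet_nonempty a α) (by rintro r ⟨s, G, _, rfl⟩; exact Phi_nonneg hastar hbd _ _ _)
  have htast : sInf (PhiSet a α) ≤ astar :=
    le_trans (csInf_le (PhiSet_bddBelow hastar hbd α) ⟨0, fun _ => 0, good_zero 0, rfl⟩)
      (Phi_zero_le hastar ha.continuous hbd α 0)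
  -- step 4 : sInf at grid point is close to sInf at α
  have hstep4 : sInf (PhiSet a (β i)) ≤ (1 + astar * La * η) * sInf (PhiSet a α) := by
    have hpos : (0:ℝ) < 1 + astar * La * η := by nlinarith [mul_nonneg hC0 hη0.le]
    have hdiv : sInf (PhiSet a (β i)) / (1 + astar * La * η) ≤ sInf (PhiSet a α) := by
      apply le_csInf (PhiSet_nonempty a α)
      rintro r ⟨s', G', ⟨hc', M', hM'⟩, rfl⟩
      have hle : Phi a (β i) s' G' ≤ (1 + astar * La * |β i - α|) * Phi a α s' G' :=
        Phi_le hastar ha hLa hbd hc' (fun p => (hM' p).2) (β i) α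
      have hcc : astar * La * |β i - α| ≤ astar * La * η := by
        rw [abs_sub_comm]
        exact mul_le_mul_of_nonneg_left hclose hC0
      have hP0 : 0 ≤ Phi a α s' G' := Phi_nonneg hastar hbd _ _ _
      have h5 : sInf (PhiSet a (β i)) ≤ (1 + astar * La * η) * Phi a α s' G' := by
        have hmem : Phi a (β i) s' G' ∈ PhiSet a (β i) := ⟨s', G', ⟨hc', M', hM'⟩, rfl⟩
        have h6 : (1 + astar * La * |β i - α|) * Phi a α s' G'
            ≤ (1 + astar * La * η) * Phi a α s' G' :=
          mul_le_mul_of_nonneg_right (by linarith) hP0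
        exact le_trans (csInf_le (PhiSet_bddBelow hastar hbd (β i)) hmem) (le_trans hle h6)
      rw [div_le_iff₀ hpos]
      linarith [h5]
    calc sInf (PhiSet a (β i))
        = (sInf (PhiSet a (β i)) / (1 + astar * La * η)) * (1 + astar * La * η) :=
          (div_mul_cancel₀ _ (ne_of_gt hpos)).symm
      _ ≤ sInf (PhiSet a α) * (1 + astar * La * η) :=
          mul_le_mul_of_nonneg_right hdiv hpos.le
      _ = (1 + astar * La * η) * sInf (PhiSet a α) := mul_comm _ _
  -- the extended, translated witness
  have hsl : sW i ≤ l := le_trans (Finset.le_sup (Finset.mem_univ i)) hl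
  have hMB : MW i ≤ B := by
    have h1 : MW i ≤ |MW i| := le_abs_self _
    have h2 : |MW i| ≤ ∑ j : Fin (N+1), |MW j| :=
      Finset.single_le_sum (f := fun j => |MW j|) (fun j _ => abs_nonneg (MW j)) (Finset.mem_univ i)
    linarith [hB]
  have hGtrC : ContDiff ℝ 1 (trG (-α) (GW i)) := contDiff_trG _ (hWc i)
  have hGtrM := good_trG (-α) (hWc i) (hWM i)
  have hmemF : MemF l B (extG (sW i) l hsl (trG (-α) (GW i))) :=
    memF_extG hsl hGtrC (fun p => (hGtrM p).1) (fun p => (hGtrM p).2) hMB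
  have hval : ∫ x, aZero a x * (1 + xiFun l (extG (sW i) l hsl (trG (-α) (GW i))) x) ^ 2 ∂ν
      = Phi a α (sW i) (GW i) := by
    have h1 : ∀ x, xiFun l (extG (sW i) l hsl (trG (-α) (GW i))) x
        = xiFun (sW i) (trG (-α) (GW i)) x :=
      xiFun_extG _ _ hsl (hGtrC.differentiable one_ne_zero)
    calc ∫ x, aZero a x * (1 + xiFun l (extG (sW i) l hsl (trG (-α) (GW i))) x) ^ 2 ∂ν
        = ∫ x, aZero a x * (1 + xiFun (sW i) (trG (-α) (GW i)) x) ^ 2 ∂ν := by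
          simp only [h1]
      _ = Phi a α (sW i) (trG α (trG (-α) (GW i))) := integral_eq_Phi hν ha.continuous hGtrC
      _ = Phi a α (sW i) (GW i) := by rw [trG_neg_cancel]
  have hFbdd : BddBelow {r : ℝ | ∃ G : (Fin (2 * l + 1) → ℝ) → ℝ, MemF l B G ∧
      r = ∫ x, aZero a x * (1 + xiFun l G x) ^ 2 ∂ν} := by
    refine ⟨0, ?_⟩
    rintro r ⟨G', _, rfl⟩
    apply integral_nonneg
    intro x
    apply mul_nonneg ?_ (sq_nonneg _)
    unfold aZero
    exact le_trans (inv_nonneg.2 hast0.le) (hbd _).1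
  have hstep1 : sInf {r : ℝ | ∃ G : (Fin (2 * l + 1) → ℝ) → ℝ, MemF l B G ∧
      r = ∫ x, aZero a x * (1 + xiFun l G x) ^ 2 ∂ν} ≤ Phi a α (sW i) (GW i) := by
    rw [← hval]
    exact csInf_le hFbdd ⟨extG (sW i) l hsl (trG (-α) (GW i)), hmemF, rfl⟩
  have hstep2 : Phi a α (sW i) (GW i) ≤ (1 + astar * La * η) * Phi a (β i) (sW i) (GW i) := by
    have hle := Phi_le hastar ha hLa hbd (hWc i) (fun p => (hWM i p).2) α (β i)
    have hcc : astar * La * |α - β i| ≤ astar * La * η := mul_le_mul_of_nonneg_left hclose hC0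
    have hP0 := Phi_nonneg hastar hbd (β i) (sW i) (GW i)
    nlinarith [hle]
  have hPlt : Phi a (β i) (sW i) (GW i) < sInf (PhiSet a (β i)) + ε/3 := hWlt i
  have hchain : sInf {r : ℝ | ∃ G : (Fin (2 * l + 1) → ℝ) → ℝ, MemF l B G ∧
      r = ∫ x, aZero a x * (1 + xiFun l G x) ^ 2 ∂ν}
      ≤ (1 + astar * La * η) * ((1 + astar * La * η) * sInf (PhiSet a α) + ε/3) := by
    have h7 : Phi a (β i) (sW i) (GW i)
        ≤ (1 + astar * La * η) * sInf (PhiSet a α) + ε/3 := by linarith [hstep4]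
    calc sInf {r : ℝ | ∃ G : (Fin (2 * l + 1) → ℝ) → ℝ, MemF l B G ∧
          r = ∫ x, aZero a x * (1 + xiFun l G x) ^ 2 ∂ν}
        ≤ Phi a α (sW i) (GW i) := hstep1
      _ ≤ (1 + astar * La * η) * Phi a (β i) (sW i) (GW i) := hstep2
      _ ≤ (1 + astar * La * η) * ((1 + astar * La * η) * sInf (PhiSet a α) + ε/3) := by
          apply mul_le_mul_of_nonneg_left h7
          nlinarith [mul_nonneg hC0 hη0.le]
  rw [htEq]
  have hX0 : 0 ≤ astar * La * η := mul_nonneg hC0 hη0.le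
  have e1 : (astar * La * η) * sInf (PhiSet a α) ≤ (astar * La * η) * astar :=
    mul_le_mul_of_nonneg_left htast hX0
  have e3 : (astar * La * η) * ((astar * La * η) * sInf (PhiSet a α))
      ≤ (astar * La * η) * sInf (PhiSet a α) := by
    nlinarith [mul_nonneg hX0 ht0, hγ1]
  have e4 : (astar * La * η) * (ε/3) ≤ ε/3 := by nlinarith [hγ1, hε.le]
  nlinarith [hchain, e1, e3, e4, hγ2]
end

section
/- (Entropy inequality and optimality of the entropy.) Let ν and μ be probability measures on the same measurable space with ν absolutely continuous with respect to μ and relative entropy H(ν|μ) = ∫ (dν/dμ)·log(dν/dμ) dμ < ∞. Then: (i) for every bounded measurable function f and every α > 0, E_ν[f] ≤ (1/α)·(H(ν|μ) + log E_μ[e^{αf}]); and (ii) H(ν|μ) is the optimal such constant, i.e. H(ν|μ) = sup over bounded measurable f of (E_ν[f] − log E_μ[e^{f}]). -/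
open MeasureTheory Real Filter

section Aux

variable {X : Type*} [MeasurableSpace X]

/-- Nonnegativity of relative entropy (via `log t ≤ t - 1`). -/
lemma kl_nonneg_aux (ν ρ : Measure X) [IsProbabilityMeasure ν] [IsProbabilityMeasure ρ]
    (h : ν ≪ ρ) (hi : Integrable (llr ν ρ) ν) : 0 ≤ ∫ x, llr ν ρ x ∂ν := by
  have heq : llr ν ρ =ᵐ[ν] fun x => - llr ρ ν x := by
    filter_upwards [neg_llr h] with x hx
    simpa using congrArg Neg.neg hx
  have h2 : Integrable (llr ρ ν) ν := by
    refine (hi.neg.congr ?_)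
    filter_upwards [neg_llr h] with x hx using hx
  have hg : Integrable (fun x => (ρ.rnDeriv ν x).toReal) ν :=
    Measure.integrable_toReal_rnDeriv
  have hpos : ∀ᵐ x ∂ν, 0 < ρ.rnDeriv ν x := Measure.rnDeriv_pos' h
  have hlt : ∀ᵐ x ∂ν, ρ.rnDeriv ν x < ⊤ := Measure.rnDeriv_lt_top ρ ν
  have key : ∫ x, llr ρ ν x ∂ν ≤ ∫ x, ((ρ.rnDeriv ν x).toReal - 1) ∂ν := by
    refine integral_mono_ae h2 (hg.sub (integrable_const 1)) ?_
    filter_upwards [hpos, hlt] with x hx hx'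
    have : 0 < (ρ.rnDeriv ν x).toReal := ENNReal.toReal_pos hx.ne' hx'.ne
    exact Real.log_le_sub_one_of_pos this
  have hgle : ∫ x, (ρ.rnDeriv ν x).toReal ∂ν ≤ 1 := by
    rw [Measure.integral_toReal_rnDeriv']
    have h1 : ρ.real Set.univ = 1 := by simp
    have h2 : 0 ≤ (ρ.singularPart ν).real Set.univ := measureReal_nonneg
    linarith
  have : ∫ x, ((ρ.rnDeriv ν x).toReal - 1) ∂ν ≤ 0 := by
    rw [integral_sub hg (integrable_const 1)]
    simp only [integral_const, measure_univ, probReal_univ, ENNReal.toReal_one, smul_eq_mul, one_mul]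
    linarith
  have hneg : ∫ x, llr ρ ν x ∂ν ≤ 0 := key.trans this
  calc (0:ℝ) ≤ - ∫ x, llr ρ ν x ∂ν := by linarith
  _ = ∫ x, - llr ρ ν x ∂ν := (integral_neg _).symm
  _ = ∫ x, llr ν ρ x ∂ν := (integral_congr_ae heq).symm

/-- The Gibbs variational inequality. -/
lemma gibbs_aux (ν μ : Measure X) [IsProbabilityMeasure ν] [IsProbabilityMeasure μ]
    (hac : ν ≪ μ) (hent : Integrable (llr ν μ) ν) (f : X → ℝ) (hf : Measurable f)
    (M : ℝ) (hM : ∀ x, |f x| ≤ M) :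
    ∫ x, f x ∂ν - Real.log (∫ x, Real.exp (f x) ∂μ) ≤ ∫ x, llr ν μ x ∂ν := by
  have hfν : Integrable f ν :=
    (integrable_const M).mono' hf.aestronglyMeasurable (ae_of_all _ fun x => hM x)
  have hexpμ : Integrable (fun x => Real.exp (f x)) μ := by
    refine (integrable_const (Real.exp M)).mono'
      (Real.measurable_exp.comp hf).aestronglyMeasurable (ae_of_all _ fun x => ?_)
    rw [Real.norm_eq_abs, abs_of_pos (Real.exp_pos _)]
    exact Real.exp_le_exp.mpr ((abs_le.mp (hM x)).2)
  haveI : IsProbabilityMeasure (μ.tilted f) := isProbabilityMeasure_tilted hexpμ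
  have hacμ' : ν ≪ μ.tilted f := hac.trans (absolutelyContinuous_tilted hexpμ)
  have hint' : Integrable (llr ν (μ.tilted f)) ν :=
    integrable_llr_tilted_right hac hfν hent hexpμ
  have h0 : 0 ≤ ∫ x, llr ν (μ.tilted f) x ∂ν := kl_nonneg_aux ν (μ.tilted f) hacμ' hint'
  have heq := integral_llr_tilted_right hac hfν hexpμ hent
  linarith [heq ▸ h0]

end Aux

/-- The relative entropy `H(ν|μ) = ∫ (dν/dμ)·log(dν/dμ) dμ`, expressed via the
Radon–Nikodym derivative. -/
noncomputable def relEntropy {X : Type*} [MeasurableSpace X] (ν μ : Measure X) : ℝ :=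
  ∫ x, (ν.rnDeriv μ x).toReal * Real.log (ν.rnDeriv μ x).toReal ∂μ

/-- **Entropy inequality and optimality of the entropy.**
Let `ν, μ` be probability measures with `ν ≪ μ` and finite relative entropy.  Then
(i) for every bounded measurable `f` and every `α > 0`,
`E_ν[f] ≤ (1/α)·(H(ν|μ) + log E_μ[e^{αf}])`, and
(ii) `H(ν|μ)` is the least upper bound of `E_ν[f] − log E_μ[e^f]` over bounded
measurable `f`. -/
theorem entropy_inequality_and_optimality
    {X : Type*} [MeasurableSpace X] (ν μ : Measure X)
    [IsProbabilityMeasure ν] [IsProbabilityMeasure μ]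
    (hac : ν ≪ μ)
    (hint : Integrable (fun x => (ν.rnDeriv μ x).toReal * Real.log (ν.rnDeriv μ x).toReal) μ) :
    (∀ f : X → ℝ, Measurable f → (∃ M : ℝ, ∀ x, |f x| ≤ M) → ∀ α : ℝ, 0 < α →
        ∫ x, f x ∂ν ≤ (1 / α) * (relEntropy ν μ + Real.log (∫ x, Real.exp (α * f x) ∂μ)))
    ∧ IsLUB {r : ℝ | ∃ f : X → ℝ, Measurable f ∧ (∃ M : ℝ, ∀ x, |f x| ≤ M) ∧
          r = ∫ x, f x ∂ν - Real.log (∫ x, Real.exp (f x) ∂μ)}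
        (relEntropy ν μ) := by
  -- relEntropy equals `∫ llr ν μ ∂ν`
  have hent : Integrable (llr ν μ) ν := by
    refine (integrable_rnDeriv_smul_iff hac).mp ?_
    simpa [llr, smul_eq_mul] using hint
  have hH : relEntropy ν μ = ∫ x, llr ν μ x ∂ν := by
    rw [relEntropy, ← integral_rnDeriv_smul hac]
    simp [llr, smul_eq_mul]
  constructor
  · -- (i)
    intro f hf hb α hα
    obtain ⟨M, hM⟩ := hb
    have h := gibbs_aux ν μ hac hent (fun x => α * f x) (hf.const_mul α) (|α| * M)
      (fun x => by rw [abs_mul]; exact mul_le_mul_of_nonneg_left (hM x) (abs_nonneg α))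
    rw [integral_const_mul] at h
    rw [one_div, inv_mul_eq_div, le_div_iff₀ hα, hH]
    linarith
  · constructor
    · -- upper bound
      rintro r ⟨f, hf, ⟨M, hM⟩, rfl⟩
      rw [hH]
      exact gibbs_aux ν μ hac hent f hf M hM
    · -- least upper bound
      intro b hb
      rw [hH]
      set g : X → ℝ := fun x => (ν.rnDeriv μ x).toReal with hg_def
      have hg_meas : Measurable g := (Measure.measurable_rnDeriv ν μ).ennreal_toReal
      -- the truncations
      set F : ℕ → X → ℝ := fun n x =>
        Real.log (max (Real.exp (-(n:ℝ))) (min (Real.exp (n:ℝ)) (g x))) with hF_def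
      have hFpos : ∀ n x, 0 < max (Real.exp (-(n:ℝ))) (min (Real.exp (n:ℝ)) (g x)) :=
        fun n x => lt_max_of_lt_left (Real.exp_pos _)
      have hF_meas : ∀ n, Measurable (F n) := fun n =>
        (measurable_const.max (measurable_const.min hg_meas)).log
      have hF_bdd : ∀ n x, |F n x| ≤ n := by
        intro n x
        rw [abs_le]
        constructor
        · calc -(n:ℝ) = Real.log (Real.exp (-(n:ℝ))) := (Real.log_exp _).symm
          _ ≤ F n x := Real.log_le_log (Real.exp_pos _) (le_max_left _ _)
        · have h1 : max (Real.exp (-(n:ℝ))) (min (Real.exp (n:ℝ)) (g x)) ≤ Real.exp (n:ℝ) := by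
            refine max_le ?_ (min_le_left _ _)
            exact Real.exp_le_exp.mpr (by have := Nat.cast_nonneg (α := ℝ) n; linarith)
          calc F n x ≤ Real.log (Real.exp (n:ℝ)) := Real.log_le_log (hFpos n x) h1
          _ = n := Real.log_exp _
      -- each truncation gives an element of the set, bounded by b
      have h_exp_int : ∀ n, Integrable (fun x => Real.exp (F n x)) μ := by
        intro n
        refine (integrable_const (Real.exp (n:ℝ))).mono'
          ((Real.measurable_exp.comp (hF_meas n)).aestronglyMeasurable) (ae_of_all _ fun x => ?_)
        rw [Real.norm_eq_abs, abs_of_pos (Real.exp_pos _)]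
        exact Real.exp_le_exp.mpr ((abs_le.mp (hF_bdd n x)).2)
      have h_exp_eq : ∀ n x, Real.exp (F n x)
          = max (Real.exp (-(n:ℝ))) (min (Real.exp (n:ℝ)) (g x)) := fun n x =>
        Real.exp_log (hFpos n x)
      have hg_int : Integrable g μ := Measure.integrable_toReal_rnDeriv
      have hg_nonneg : ∀ x, 0 ≤ g x := fun x => ENNReal.toReal_nonneg
      have h_exp_le : ∀ n, ∫ x, Real.exp (F n x) ∂μ ≤ 1 + Real.exp (-(n:ℝ)) := by
        intro n
        have h1 : ∫ x, Real.exp (F n x) ∂μ ≤ ∫ x, (g x + Real.exp (-(n:ℝ))) ∂μ := by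
          refine integral_mono (h_exp_int n) (hg_int.add (integrable_const _)) fun x => ?_
          rw [h_exp_eq]
          refine max_le (by linarith [hg_nonneg x]) ?_
          calc min (Real.exp (n:ℝ)) (g x) ≤ g x := min_le_right _ _
          _ ≤ g x + Real.exp (-(n:ℝ)) := by linarith [Real.exp_pos (-(n:ℝ))]
        rw [integral_add hg_int (integrable_const _)] at h1
        simp only [integral_const, measure_univ, probReal_univ, ENNReal.toReal_one, smul_eq_mul, one_mul] at h1
        have h2 : ∫ x, g x ∂μ = 1 := by
          rw [hg_def, Measure.integral_toReal_rnDeriv hac]; simp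
        linarith
      have h_log_le : ∀ n, Real.log (∫ x, Real.exp (F n x) ∂μ)
          ≤ Real.log (1 + Real.exp (-(n:ℝ))) := fun n =>
        Real.log_le_log (integral_exp_pos (h_exp_int n)) (h_exp_le n)
      -- convergence of ∫ F n ∂ν to ∫ llr ν μ ∂ν
      have hg_pos : ∀ᵐ x ∂ν, 0 < ν.rnDeriv μ x := Measure.rnDeriv_pos hac
      have hg_lt : ∀ᵐ x ∂ν, ν.rnDeriv μ x < ⊤ := hac.ae_le (Measure.rnDeriv_lt_top ν μ)
      have h_tendsto : Tendsto (fun n => ∫ x, F n x ∂ν) atTop (nhds (∫ x, llr ν μ x ∂ν)) := by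
        refine tendsto_integral_of_dominated_convergence (fun x => |llr ν μ x|)
          (fun n => (hF_meas n).aestronglyMeasurable) hent.abs ?_ ?_
        · intro n
          filter_upwards [hg_pos, hg_lt] with x hx hx'
          have hgx : 0 < g x := ENNReal.toReal_pos hx.ne' hx'.ne
          rw [Real.norm_eq_abs]
          have hllr : llr ν μ x = Real.log (g x) := rfl
          rw [hllr]
          rcases le_total 1 (g x) with h1 | h1
          · have hl : 0 ≤ Real.log (g x) := Real.log_nonneg h1
            have hc1 : F n x ≤ Real.log (g x) := by
              refine Real.log_le_log (hFpos n x) (max_le ?_ ((min_le_right _ _)))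
              calc Real.exp (-(n:ℝ)) ≤ 1 := Real.exp_le_one_iff.mpr (by have := Nat.cast_nonneg (α := ℝ) n; linarith)
              _ ≤ g x := h1
            have hc2 : 0 ≤ F n x := by
              rw [hF_def]
              refine Real.log_nonneg (le_max_of_le_right (le_min ?_ h1))
              exact Real.one_le_exp (Nat.cast_nonneg n)
            rw [abs_of_nonneg hc2, abs_of_nonneg hl]; exact hc1
          · have hl : Real.log (g x) ≤ 0 := Real.log_nonpos (hg_nonneg x) h1
            have hc1 : Real.log (g x) ≤ F n x := by
              refine Real.log_le_log hgx (le_max_of_le_right (le_min ?_ le_rfl))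
              exact h1.trans (Real.one_le_exp (Nat.cast_nonneg n))
            have hc2 : F n x ≤ 0 := by
              refine Real.log_nonpos (le_of_lt (hFpos n x)) (max_le ?_ ?_)
              · exact Real.exp_le_one_iff.mpr (by have := Nat.cast_nonneg (α := ℝ) n; linarith)
              · exact (min_le_right _ _).trans h1
            rw [abs_of_nonpos hc2, abs_of_nonpos hl]; linarith
        · filter_upwards [hg_pos, hg_lt] with x hx hx'
          have hgx : 0 < g x := ENNReal.toReal_pos hx.ne' hx'.ne
          refine Tendsto.congr' ?_ tendsto_const_nhds
          have hev : ∀ᶠ n : ℕ in atTop, |Real.log (g x)| ≤ n :=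
            eventually_atTop.mpr ⟨⌈|Real.log (g x)|⌉₊, fun n hn =>
              (Nat.le_ceil _).trans (Nat.cast_le.mpr hn)⟩
          filter_upwards [hev] with n hn
          have h1 : Real.exp (-(n:ℝ)) ≤ g x := by
            rw [← Real.exp_log hgx]
            exact Real.exp_le_exp.mpr (by cases abs_le.mp hn; linarith)
          have h2 : g x ≤ Real.exp (n:ℝ) := by
            rw [← Real.exp_log hgx]
            exact Real.exp_le_exp.mpr (by cases abs_le.mp hn; linarith)
          show llr ν μ x = F n x
          rw [hF_def]
          simp only [min_eq_right h2, max_eq_right h1]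
          rfl
      -- conclude
      have h_log_tendsto : Tendsto (fun n : ℕ => Real.log (1 + Real.exp (-(n:ℝ)))) atTop
          (nhds 0) := by
        have h1 : Tendsto (fun n : ℕ => Real.exp (-(n:ℝ))) atTop (nhds 0) := by
          refine Real.tendsto_exp_atBot.comp ?_
          exact tendsto_neg_atBot_iff.mpr tendsto_natCast_atTop_atTop
        have h2 : Tendsto (fun n : ℕ => 1 + Real.exp (-(n:ℝ))) atTop (nhds 1) := by
          simpa using tendsto_const_nhds.add h1
        simpa [Function.comp_def] using ((Real.continuousAt_log (by norm_num)).tendsto.comp h2)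
      have h_seq : Tendsto (fun n : ℕ => ∫ x, F n x ∂ν - Real.log (1 + Real.exp (-(n:ℝ))))
          atTop (nhds (∫ x, llr ν μ x ∂ν)) := by
        simpa using h_tendsto.sub h_log_tendsto
      refine le_of_tendsto h_seq (Filter.Eventually.of_forall fun n => ?_)
      have hmem : ∫ x, F n x ∂ν - Real.log (∫ x, Real.exp (F n x) ∂μ) ≤ b :=
        hb ⟨F n, hF_meas n, ⟨n, hF_bdd n⟩, rfl⟩
      linarith [h_log_le n]
end
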